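/- arXiv:0805.0141 — 4 statements merged into one kernel-verified Lean document; each statement's English description precedes it below -/
import Mathlib

section
/- Let f : ℝ² → H be differentiable, let ι(α,β) := (cos α sin β)i + (sin α sin β)j + (cos β)k, and define ∂f/∂ι := ι_α⁻¹ · ∂f/∂α + ι_β⁻¹ · ∂f/∂β, where ι_α, ι_β are the partial derivatives of ι with respect to α and β (assumed invertible, i.e., sin β ≠ 0). Then ∂(ιf)/∂ι + ι · ∂f/∂ι = 2f. -/
/-- Spherical parametrization of the unit sphere of imaginary quaternions. -/
noncomputable def iotaS (α β : ℝ) : Quaternion ℝ :=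
  ⟨0, Real.cos α * Real.sin β, Real.sin α * Real.sin β, Real.cos β⟩

/-- Partial derivative of `iotaS` with respect to `α`. -/
noncomputable def iotaA (α β : ℝ) : Quaternion ℝ := deriv (fun s => iotaS s β) α

/-- Partial derivative of `iotaS` with respect to `β`. -/
noncomputable def iotaB (α β : ℝ) : Quaternion ℝ := deriv (fun s => iotaS α s) β

/-- The angular operator `∂/∂ι := ι_α⁻¹ ∂/∂α + ι_β⁻¹ ∂/∂β`. -/
noncomputable def Dangular (g : ℝ × ℝ → Quaternion ℝ) (p : ℝ × ℝ) : Quaternion ℝ :=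
  (iotaA p.1 p.2)⁻¹ * fderiv ℝ g p (1, 0) + (iotaB p.1 p.2)⁻¹ * fderiv ℝ g p (0, 1)

/-!
By the product rule, `ι_α⁻¹ ∂_α(ι f) = f + ι_α⁻¹ ι ∂_α f`, and likewise in `β`, so
`(∂/∂ι)(ι f) = 2 f + ι_α⁻¹ ι ∂_α f + ι_β⁻¹ ι ∂_β f`. Since `ι` is a unit imaginary quaternion,
`ι² = -1`; differentiating this gives `ι_α ι = -ι ι_α` and `ι_β ι = -ι ι_β`, hence
`ι_α⁻¹ ι = -ι ι_α⁻¹` and `ι_β⁻¹ ι = -ι ι_β⁻¹`, and the last two terms are exactly `-ι (∂/∂ι) f`.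
-/

open Real

theorem inv_mul_eq_neg_mul_inv_of_mul_eq_neg {G : Type*} [GroupWithZero G] [HasDistribNeg G]
    {x y : G} (h : y * x = -(x * y)) : y⁻¹ * x = -(x * y⁻¹) := by
  have hy : SemiconjBy y x (-x) := by rw [SemiconjBy, h, neg_mul]
  have hy_inv := hy.inv_symm_left₀
  rw [SemiconjBy, mul_neg] at hy_inv
  exact neg_eq_iff_eq_neg.mp hy_inv

theorem HasDerivAt.mul_eq_neg_mul_of_mul_self_const {𝕜 𝔸 : Type*} [NontriviallyNormedField 𝕜]
    [NormedRing 𝔸] [NormedAlgebra 𝕜 𝔸] {c : 𝕜 → 𝔸} {c' a : 𝔸} {x : 𝕜}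
    (hc : HasDerivAt c c' x) (h : ∀ t, c t * c t = a) : c' * c x = -(c x * c') := by
  have h0 : HasDerivAt (c * c) 0 x := by
    rw [show c * c = fun _ => a from funext h]
    exact hasDerivAt_const x a
  exact eq_neg_of_add_eq_zero_left ((hc.mul hc).unique h0)

section PartialDerivatives

variable {𝕜 E : Type*} [NontriviallyNormedField 𝕜] [NormedAddCommGroup E] [NormedSpace 𝕜 E]
  {g : 𝕜 × 𝕜 → E} {a b : 𝕜}

theorem fderiv_apply_one_zero (hg : DifferentiableAt 𝕜 g (a, b)) :
    fderiv 𝕜 g (a, b) (1, 0) = deriv (fun s => g (s, b)) a :=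
  ((hg.hasFDerivAt.comp_hasDerivAt a ((hasDerivAt_id a).prodMk (hasDerivAt_const a b))).deriv).symm

theorem fderiv_apply_zero_one (hg : DifferentiableAt 𝕜 g (a, b)) :
    fderiv 𝕜 g (a, b) (0, 1) = deriv (fun s => g (a, s)) b :=
  ((hg.hasFDerivAt.comp_hasDerivAt b ((hasDerivAt_const b a).prodMk (hasDerivAt_id b))).deriv).symm

end PartialDerivatives

-- `(F := Quaternion ℝ)`: otherwise `⟨_, _, _, _⟩` elaborates in `ℍ[ℝ,-1,0,-1]`, which has no norm.
theorem Quaternion.hasDerivAt_mk {f₀ f₁ f₂ f₃ : ℝ → ℝ} {a b c d x : ℝ}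
    (h₀ : HasDerivAt f₀ a x) (h₁ : HasDerivAt f₁ b x) (h₂ : HasDerivAt f₂ c x)
    (h₃ : HasDerivAt f₃ d x) :
    HasDerivAt (F := Quaternion ℝ) (fun t => ⟨f₀ t, f₁ t, f₂ t, f₃ t⟩) ⟨a, b, c, d⟩ x := by
  have h : HasDerivAt (fun t => ![f₀ t, f₁ t, f₂ t, f₃ t]) ![a, b, c, d] x := by
    simp [hasDerivAt_pi, Fin.forall_fin_succ, *]
  let e : Quaternion ℝ ≃ₗ[ℝ] (Fin 4 → ℝ) := QuaternionAlgebra.linearEquivTuple _ _ _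
  exact e.toContinuousLinearEquiv.symm.hasFDerivAt.comp_hasDerivAt x h

theorem Quaternion.differentiableAt_mk {E : Type*} [NormedAddCommGroup E] [NormedSpace ℝ E]
    {f₀ f₁ f₂ f₃ : E → ℝ} {x : E} (h₀ : DifferentiableAt ℝ f₀ x) (h₁ : DifferentiableAt ℝ f₁ x)
    (h₂ : DifferentiableAt ℝ f₂ x) (h₃ : DifferentiableAt ℝ f₃ x) :
    DifferentiableAt (F := Quaternion ℝ) ℝ (fun t => ⟨f₀ t, f₁ t, f₂ t, f₃ t⟩) x := by
  have h : DifferentiableAt ℝ (fun t => ![f₀ t, f₁ t, f₂ t, f₃ t]) x := by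
    simp [differentiableAt_pi, Fin.forall_fin_succ, *]
  let e : Quaternion ℝ ≃ₗ[ℝ] (Fin 4 → ℝ) := QuaternionAlgebra.linearEquivTuple _ _ _
  exact e.toContinuousLinearEquiv.symm.differentiableAt.comp x h

theorem normSq_iotaS (α β : ℝ) : Quaternion.normSq (iotaS α β) = 1 := by
  rw [Quaternion.normSq_def']
  simp only [iotaS]
  linear_combination sin β ^ 2 * sin_sq_add_cos_sq α + sin_sq_add_cos_sq β

theorem iotaS_mul_self (α β : ℝ) : iotaS α β * iotaS α β = -1 := by
  have hstar : star (iotaS α β) = -iotaS α β := Quaternion.star_eq_neg.mpr rfl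
  rw [← neg_neg (iotaS α β * _), ← neg_mul, ← hstar, Quaternion.star_mul_self, normSq_iotaS,
    Quaternion.coe_one]

theorem hasDerivAt_iotaS_fst (α β : ℝ) :
    HasDerivAt (fun s => iotaS s β) ⟨0, -sin α * sin β, cos α * sin β, 0⟩ α :=
  Quaternion.hasDerivAt_mk (hasDerivAt_const _ _) ((hasDerivAt_cos α).mul_const _)
    ((hasDerivAt_sin α).mul_const _) (hasDerivAt_const _ _)

theorem hasDerivAt_iotaS_snd (α β : ℝ) :
    HasDerivAt (fun s => iotaS α s) ⟨0, cos α * cos β, sin α * cos β, -sin β⟩ β :=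
  Quaternion.hasDerivAt_mk (hasDerivAt_const _ _) ((hasDerivAt_sin β).const_mul _)
    ((hasDerivAt_sin β).const_mul _) (hasDerivAt_cos β)

theorem differentiable_iotaS : Differentiable ℝ fun p : ℝ × ℝ => iotaS p.1 p.2 := fun _ =>
  Quaternion.differentiableAt_mk (by fun_prop) (by fun_prop) (by fun_prop) (by fun_prop)

theorem iotaA_mul_iotaS (α β : ℝ) : iotaA α β * iotaS α β = -(iotaS α β * iotaA α β) :=
  (hasDerivAt_iotaS_fst α β).differentiableAt.hasDerivAt.mul_eq_neg_mul_of_mul_self_const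
    fun s => iotaS_mul_self s β

theorem iotaB_mul_iotaS (α β : ℝ) : iotaB α β * iotaS α β = -(iotaS α β * iotaB α β) :=
  (hasDerivAt_iotaS_snd α β).differentiableAt.hasDerivAt.mul_eq_neg_mul_of_mul_self_const
    (iotaS_mul_self α)

theorem iotaA_ne_zero (α : ℝ) {β : ℝ} (hβ : sin β ≠ 0) : iotaA α β ≠ 0 := by
  rw [iotaA, (hasDerivAt_iotaS_fst α β).deriv]
  intro h
  have hI : -sin α * sin β = 0 := congrArg QuaternionAlgebra.imI h
  have hJ : cos α * sin β = 0 := congrArg QuaternionAlgebra.imJ h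
  exact hβ (by linear_combination (-sin β) * sin_sq_add_cos_sq α - sin α * hI + cos α * hJ)

theorem iotaB_ne_zero (α : ℝ) {β : ℝ} (hβ : sin β ≠ 0) : iotaB α β ≠ 0 := by
  rw [iotaB, (hasDerivAt_iotaS_snd α β).deriv]
  intro h
  exact hβ (neg_eq_zero.mp (congrArg QuaternionAlgebra.imK h))

/-- The fundamental identity `(∂/∂ι)(ι f) + ι (∂/∂ι) f = 2 f` for differentiable
quaternionic functions of the spherical variables `(α, β)` with `sin β ≠ 0`. -/
theorem Dangular_iota_mul_add_iota_mul_Dangular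
    (f : ℝ × ℝ → Quaternion ℝ) (hf : Differentiable ℝ f)
    (α β : ℝ) (hβ : Real.sin β ≠ 0) :
    Dangular (fun p => iotaS p.1 p.2 * f p) (α, β) + iotaS α β * Dangular f (α, β)
      = 2 * f (α, β) := by
  have hA : fderiv ℝ (fun p : ℝ × ℝ => iotaS p.1 p.2) (α, β) (1, 0) = iotaA α β :=
    fderiv_apply_one_zero (differentiable_iotaS _)
  have hB : fderiv ℝ (fun p : ℝ × ℝ => iotaS p.1 p.2) (α, β) (0, 1) = iotaB α β :=
    fderiv_apply_zero_one (differentiable_iotaS _)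
  simp only [Dangular, fderiv_fun_mul' (differentiable_iotaS _) (hf _), add_apply, smul_apply,
    smul_eq_mul, MulOpposite.smul_eq_mul_unop, MulOpposite.unop_op, hA, hB]
  simp only [mul_add, ← mul_assoc, inv_mul_eq_neg_mul_inv_of_mul_eq_neg (iotaA_mul_iotaS α β),
    inv_mul_eq_neg_mul_inv_of_mul_eq_neg (iotaB_mul_iotaS α β),
    inv_mul_cancel₀ (iotaA_ne_zero α hβ), inv_mul_cancel₀ (iotaB_ne_zero α hβ), one_mul, neg_mul]
  rw [two_mul]
  abel
end

section
/- Let ι be a purely imaginary unit quaternion and n ≥ 1. The function f(t,r) := (t + rι)⁻ⁿ, defined for (t,r) ≠ (0,0), satisfies ∂f/∂t + ι ∂f/∂r = 0, i.e., negative power functions are Cullen-regular away from the origin of the slice. -/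
/-!
The map `ℂ → ℍ` sending `I ↦ ι` is an `ℝ`-algebra homomorphism onto the slice `ℝ[ι]`, and it
carries `z ↦ z ^ (-n)` to `(t + rι)⁻ⁿ`. Being `ℝ`-linear, it commutes with the real partial
derivatives, so it suffices to know that a holomorphic `g` satisfies `∂g/∂t + I ∂g/∂r = 0`; by the
chain rule `∂g/∂t = g'` and `∂g/∂r = g' I`, and `I · I = -1`.
-/

open Complex

theorem LinearMap.hasDerivAt_comp_of_finiteDimensional {E : Type*} [NormedAddCommGroup E]
    [NormedSpace ℝ E] [FiniteDimensional ℝ E] {F : Type*} [NormedAddCommGroup F] [NormedSpace ℝ F]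
    (φ : E →ₗ[ℝ] F) {u : ℝ → E} {c : E} {x : ℝ} (hu : HasDerivAt u c x) :
    HasDerivAt (fun s => φ (u s)) (φ c) x :=
  φ.toContinuousLinearMap.hasFDerivAt.comp_hasDerivAt x hu

namespace Complex

variable {g : ℂ → ℂ} {d : ℂ} {t r : ℝ}

theorem hasDerivAt_comp_ofReal_add_mul_I (hg : HasDerivAt g d (t + r * I)) :
    HasDerivAt (fun s : ℝ => g (s + r * I)) d t :=
  (hg.comp_add_const (t : ℂ) (r * I)).comp_ofReal

theorem hasDerivAt_comp_add_ofReal_mul_I (hg : HasDerivAt g d (t + r * I)) :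
    HasDerivAt (fun s : ℝ => g (t + s * I)) (d * I) r := by
  simpa using (hg.comp_const_add (t : ℂ) _).comp (r : ℂ) ((hasDerivAt_id (r : ℂ)).mul_const I)
    |>.comp_ofReal

theorem liftAux_ofReal_add_mul_I {A : Type*} [Ring A] [Algebra ℝ A] (ι : A) (hι : ι * ι = -1)
    (t r : ℝ) : liftAux ι hι (t + r * I) = algebraMap ℝ A t + r • ι := by
  simp [liftAux_apply]

theorem ofReal_add_ofReal_mul_I_ne_zero (h : (t, r) ≠ (0, 0)) : (t : ℂ) + r * I ≠ 0 := by
  simpa [Complex.ext_iff] using h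

end Complex

theorem AlgHom.deriv_comp_add_mul_deriv_comp_eq_zero {A : Type*} [NormedRing A]
    [NormedAlgebra ℝ A] (φ : ℂ →ₐ[ℝ] A) {g : ℂ → ℂ} {d : ℂ} {t r : ℝ}
    (hg : HasDerivAt g d (t + r * I)) :
    deriv (fun s : ℝ => φ (g (s + r * I))) t + φ I * deriv (fun s : ℝ => φ (g (t + s * I))) r
      = 0 := by
  have hre : HasDerivAt (fun s : ℝ => φ (g (s + r * I))) (φ d) t :=
    φ.toLinearMap.hasDerivAt_comp_of_finiteDimensional (hasDerivAt_comp_ofReal_add_mul_I hg)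
  have him : HasDerivAt (fun s : ℝ => φ (g (t + s * I))) (φ (d * I)) r :=
    φ.toLinearMap.hasDerivAt_comp_of_finiteDimensional (hasDerivAt_comp_add_ofReal_mul_I hg)
  rw [hre.deriv, him.deriv, ← map_mul, ← map_add,
    show d + I * (d * I) = 0 by linear_combination d * I_mul_I, map_zero]

theorem zpow_neg_cullenRegular_general (ι : Quaternion ℝ)
    (h1 : ι * ι = -1) (n : ℕ) (t r : ℝ) (h : (t, r) ≠ (0, 0)) :
    deriv (fun s : ℝ => ((s : Quaternion ℝ) + r • ι) ^ (-(n : ℤ))) t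
      + ι * deriv (fun s : ℝ => ((t : Quaternion ℝ) + s • ι) ^ (-(n : ℤ))) r = 0 := by
  have hslice := (liftAux ι h1).deriv_comp_add_mul_deriv_comp_eq_zero
    (hasDerivAt_zpow (-(n : ℤ)) _ (Or.inl (ofReal_add_ofReal_mul_I_ne_zero h)))
  simpa only [map_zpow₀, liftAux_ofReal_add_mul_I, liftAux_apply_I, Quaternion.algebraMap_def]
    using hslice

/-- For a purely imaginary unit quaternion `ι` and `n ≥ 1`, the negative power
function `f(t,r) = (t + rι)⁻ⁿ` satisfies `∂f/∂t + ι ∂f/∂r = 0` away from the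
origin of the slice. -/
theorem zpow_neg_cullenRegular (ι : Quaternion ℝ) (h0 : ι.re = 0)
    (h1 : ι * ι = -1) (n : ℕ) (hn : 1 ≤ n) (t r : ℝ) (h : (t, r) ≠ (0, 0)) :
    deriv (fun s : ℝ => ((s : Quaternion ℝ) + r • ι) ^ (-(n : ℤ))) t
      + ι * deriv (fun s : ℝ => ((t : Quaternion ℝ) + s • ι) ^ (-(n : ℤ))) r = 0 :=
  zpow_neg_cullenRegular_general ι h1 n t r h
end

section
/- The only pairs of C¹ real-valued functions u, v defined on all of ℝ × (0, π) that extend continuously to the closed strip corresponding to the whole 2-sphere and satisfy the spherical Cauchy–Riemann system (sin β)⁻¹ v_α + u_β = 0, (sin β)⁻¹ u_α − v_β = 0 with 2π-periodicity in α, under the assumption that u and v are bounded, are the constant functions. -/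
/-!
The substitution `β = 2 arctan (exp y)` (inverse Mercator projection) maps `ℂ` onto the strip
`ℝ × (0, π)` and satisfies `dβ/dy = sin β`, so it turns the spherical Cauchy–Riemann system for
`(u, v)` into the classical one for `z ↦ u + i v` pulled back to `ℂ`. That pullback is a bounded
entire function, hence constant by Liouville's theorem.
-/

open Real Set
open Complex (I equivRealProdCLM reCLM imCLM)

theorem differentiableAt_equivRealProdCLM_symm_comp_of_hasFDerivAt {g : ℂ → ℝ × ℝ} {D : ℂ →L[ℝ] ℝ × ℝ} {z : ℂ}
    (hg : HasFDerivAt g D z) (hre : (D I).1 = -(D 1).2) (him : (D I).2 = (D 1).1) :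
    DifferentiableAt ℂ (fun w => equivRealProdCLM.symm (g w)) z := by
  have hF := (equivRealProdCLM.symm.toContinuousLinearMap.hasFDerivAt).comp z hg
  refine (hF.complexOfReal_hasFDerivAt ?_).differentiableAt
  apply Complex.ext <;> simp [hre, him]

noncomputable def mercatorColatitude (y : ℝ) : ℝ := 2 * arctan (exp y)

theorem mercatorColatitude_mem_Ioo (y : ℝ) : mercatorColatitude y ∈ Ioo 0 π := by
  have hpos : 0 < arctan (exp y) := arctan_zero ▸ arctan_strictMono (exp_pos y)
  have hlt := arctan_lt_pi_div_two (exp y)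
  constructor <;> unfold mercatorColatitude <;> linarith

theorem hasDerivAt_mercatorColatitude (y : ℝ) :
    HasDerivAt mercatorColatitude (sin (mercatorColatitude y)) y := by
  have hsin : sin (mercatorColatitude y) = 2 * (1 / (1 + exp y ^ 2) * exp y) := by
    have hpos : (0 : ℝ) < 1 + exp y ^ 2 := by positivity
    rw [mercatorColatitude, sin_two_mul, sin_arctan, cos_arctan]
    field_simp
    rw [sq_sqrt hpos.le]
  rw [hsin]
  exact ((hasDerivAt_arctan _).comp y (hasDerivAt_exp y)).const_mul 2

theorem mercatorColatitude_log_tan_half {β : ℝ} (hβ : β ∈ Ioo 0 π) :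
    mercatorColatitude (log (tan (β / 2))) = β := by
  have hlt : β / 2 < π / 2 := by linarith [hβ.2]
  have htan : 0 < tan (β / 2) := tan_pos_of_pos_of_lt_pi_div_two (by linarith [hβ.1]) hlt
  rw [mercatorColatitude, exp_log htan, arctan_tan (by linarith [hβ.1, pi_pos]) hlt]
  ring

noncomputable def mercatorChart (z : ℂ) : ℝ × ℝ := (z.re, mercatorColatitude z.im)

theorem mercatorChart_mem (z : ℂ) : (mercatorChart z).2 ∈ Ioo 0 π :=
  mercatorColatitude_mem_Ioo z.im

theorem exists_mercatorChart_eq {p : ℝ × ℝ} (hp : p.2 ∈ Ioo 0 π) :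
    ∃ z : ℂ, mercatorChart z = p :=
  ⟨⟨p.1, log (tan (p.2 / 2))⟩, Prod.ext rfl (mercatorColatitude_log_tan_half hp)⟩

theorem hasFDerivAt_mercatorChart (z : ℂ) :
    HasFDerivAt mercatorChart
      (reCLM.prod (sin (mercatorChart z).2 • imCLM)) z :=
  reCLM.hasFDerivAt.prodMk
    ((hasDerivAt_mercatorColatitude z.im).comp_hasFDerivAt z imCLM.hasFDerivAt)

theorem differentiableAt_mercatorChart_pullback {u v : ℝ × ℝ → ℝ} {z : ℂ}
    (hu : DifferentiableAt ℝ u (mercatorChart z)) (hv : DifferentiableAt ℝ v (mercatorChart z))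
    (h1 : (sin (mercatorChart z).2)⁻¹ * fderiv ℝ v (mercatorChart z) (1, 0)
      + fderiv ℝ u (mercatorChart z) (0, 1) = 0)
    (h2 : (sin (mercatorChart z).2)⁻¹ * fderiv ℝ u (mercatorChart z) (1, 0)
      - fderiv ℝ v (mercatorChart z) (0, 1) = 0) :
    DifferentiableAt ℂ
      (fun w => equivRealProdCLM.symm (u (mercatorChart w), v (mercatorChart w))) z := by
  have hL := hasFDerivAt_mercatorChart z
  set p := mercatorChart z
  have hsin : sin p.2 ≠ 0 :=
    (sin_pos_of_pos_of_lt_pi (mercatorChart_mem z).1 (mercatorChart_mem z).2).ne'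
  have hscale (T : ℝ × ℝ →L[ℝ] ℝ) : T (0, sin p.2) = sin p.2 * T (0, 1) := by
    rw [← smul_eq_mul, ← map_smul, Prod.smul_mk, smul_zero, smul_eq_mul, mul_one]
  refine differentiableAt_equivRealProdCLM_symm_comp_of_hasFDerivAt
    ((hu.hasFDerivAt.comp z hL).prodMk (hv.hasFDerivAt.comp z hL)) ?_ ?_ <;>
    simp only [ContinuousLinearMap.prod_apply, ContinuousLinearMap.comp_apply, Complex.reCLM_apply,
      Complex.imCLM_apply, smul_apply, smul_eq_mul, Complex.I_re, Complex.I_im, Complex.one_re,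
      Complex.one_im, mul_one, mul_zero, hscale]
  · field_simp at h1
    linarith
  · field_simp at h2
    linarith

theorem spherical_CR_global_implies_constant_general
    (u v : ℝ × ℝ → ℝ)
    (hu : ContDiffOn ℝ 1 u {p : ℝ × ℝ | p.2 ∈ Set.Ioo 0 Real.pi})
    (hv : ContDiffOn ℝ 1 v {p : ℝ × ℝ | p.2 ∈ Set.Ioo 0 Real.pi})
    (hbdd : ∃ M : ℝ, ∀ p : ℝ × ℝ, p.2 ∈ Set.Ioo 0 Real.pi →
      |u p| ≤ M ∧ |v p| ≤ M)
    (h1 : ∀ p : ℝ × ℝ, p.2 ∈ Set.Ioo 0 Real.pi →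
      (Real.sin p.2)⁻¹ * fderiv ℝ v p (1, 0) + fderiv ℝ u p (0, 1) = 0)
    (h2 : ∀ p : ℝ × ℝ, p.2 ∈ Set.Ioo 0 Real.pi →
      (Real.sin p.2)⁻¹ * fderiv ℝ u p (1, 0) - fderiv ℝ v p (0, 1) = 0) :
    ∃ c₁ c₂ : ℝ, ∀ p : ℝ × ℝ, p.2 ∈ Set.Ioo 0 Real.pi → u p = c₁ ∧ v p = c₂ := by
  obtain ⟨M, hM⟩ := hbdd
  set F : ℂ → ℂ := fun w => equivRealProdCLM.symm (u (mercatorChart w), v (mercatorChart w))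
  have hstrip : IsOpen {p : ℝ × ℝ | p.2 ∈ Ioo 0 π} := isOpen_Ioo.preimage continuous_snd
  have hdiff {f : ℝ × ℝ → ℝ} (hf : ContDiffOn ℝ 1 f {p : ℝ × ℝ | p.2 ∈ Ioo 0 π}) (z : ℂ) :
      DifferentiableAt ℝ f (mercatorChart z) :=
    (hf.differentiableOn one_ne_zero _ (mercatorChart_mem z)).differentiableAt
      (hstrip.mem_nhds (mercatorChart_mem z))
  have hF : Differentiable ℂ F := fun z =>
    differentiableAt_mercatorChart_pullback (hdiff hu z) (hdiff hv z)
      (h1 _ (mercatorChart_mem z)) (h2 _ (mercatorChart_mem z))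
  have hFbdd : Bornology.IsBounded (Set.range F) := by
    refine isBounded_iff_forall_norm_le.2 ⟨M + M, ?_⟩
    rintro _ ⟨z, rfl⟩
    obtain ⟨hMu, hMv⟩ := hM _ (mercatorChart_mem z)
    calc ‖F z‖ ≤ |(F z).re| + |(F z).im| := Complex.norm_le_abs_re_add_abs_im _
      _ ≤ M + M := by simpa [F] using add_le_add hMu hMv
  obtain ⟨c, hc⟩ := hF.exists_const_forall_eq_of_bounded hFbdd
  refine ⟨c.re, c.im, fun p hp => ?_⟩
  obtain ⟨z, rfl⟩ := exists_mercatorChart_eq hp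
  simpa [F, Complex.ext_iff] using hc z

/-- Liouville-type theorem on the sphere: bounded `C¹` solutions `u, v` of the
spherical Cauchy--Riemann system on `ℝ × (0, π)`, `2π`-periodic in `α`
(i.e. defined on the whole 2-sphere), are constant. -/
theorem spherical_CR_global_implies_constant
    (u v : ℝ × ℝ → ℝ)
    (hu : ContDiffOn ℝ 1 u {p : ℝ × ℝ | p.2 ∈ Set.Ioo 0 Real.pi})
    (hv : ContDiffOn ℝ 1 v {p : ℝ × ℝ | p.2 ∈ Set.Ioo 0 Real.pi})
    (huper : ∀ α β : ℝ, β ∈ Set.Ioo 0 Real.pi → u (α + 2 * Real.pi, β) = u (α, β))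
    (hvper : ∀ α β : ℝ, β ∈ Set.Ioo 0 Real.pi → v (α + 2 * Real.pi, β) = v (α, β))
    (hbdd : ∃ M : ℝ, ∀ p : ℝ × ℝ, p.2 ∈ Set.Ioo 0 Real.pi →
      |u p| ≤ M ∧ |v p| ≤ M)
    (h1 : ∀ p : ℝ × ℝ, p.2 ∈ Set.Ioo 0 Real.pi →
      (Real.sin p.2)⁻¹ * fderiv ℝ v p (1, 0) + fderiv ℝ u p (0, 1) = 0)
    (h2 : ∀ p : ℝ × ℝ, p.2 ∈ Set.Ioo 0 Real.pi →
      (Real.sin p.2)⁻¹ * fderiv ℝ u p (1, 0) - fderiv ℝ v p (0, 1) = 0) :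
    ∃ c₁ c₂ : ℝ, ∀ p : ℝ × ℝ, p.2 ∈ Set.Ioo 0 Real.pi → u p = c₁ ∧ v p = c₂ :=
  spherical_CR_global_implies_constant_general u v hu hv hbdd h1 h2
end

section
/- Let K* ⊆ H ≅ ℝ⁴ be a bounded open set with smooth boundary K disjoint from the real axis, with outward unit normal components (n₀,n₁,n₂,n₃), and set n(p) := n₀ + n₁i + n₂j + n₃k. If f is left-Cullen-regular and C¹ on a neighborhood of the closure of K*, with decomposition f = u + ιv where v = (1/2)(∂/∂ι)f, then ∫_K n(p) f(p) dS = ∫_{K*} (−2v/r) dV, where r is the norm of the imaginary part of p. -/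
open MeasureTheory

/-- Identification `ℝ⁴ ≅ ℍ`, `p ↦ t + xi + yj + zk`. -/
noncomputable def toQuat (p : EuclideanSpace ℝ (Fin 4)) : Quaternion ℝ :=
  ⟨p 0, p 1, p 2, p 3⟩

/-- Identification `ℍ ≅ ℝ⁴`. -/
noncomputable def toE4 (q : Quaternion ℝ) : EuclideanSpace ℝ (Fin 4) :=
  (EuclideanSpace.equiv (Fin 4) ℝ).symm ![q.re, q.imI, q.imJ, q.imK]

/-- The quaternionic units `1, i, j, k`. -/
noncomputable def quatUnit : Fin 4 → Quaternion ℝ :=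
  ![1, ⟨0, 1, 0, 0⟩, ⟨0, 0, 1, 0⟩, ⟨0, 0, 0, 1⟩]

/-- The left-Fueter operator `D_l = ∂/∂t + i ∂/∂x + j ∂/∂y + k ∂/∂z`. -/
noncomputable def fueterL (f : EuclideanSpace ℝ (Fin 4) → Quaternion ℝ)
    (p : EuclideanSpace ℝ (Fin 4)) : Quaternion ℝ :=
  ∑ i : Fin 4, quatUnit i * fderiv ℝ f p (EuclideanSpace.single i 1)

/-- The unit imaginary part `ι(p)` of the quaternion corresponding to `p`. -/
noncomputable def iotaOf (p : EuclideanSpace ℝ (Fin 4)) : Quaternion ℝ :=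
  (‖(toQuat p).im‖)⁻¹ • (toQuat p).im

/-- The Cullen operator `∂/∂t + ι ∂/∂r` in the slice coordinates `p = t + rι`. -/
noncomputable def cullenOp (f : EuclideanSpace ℝ (Fin 4) → Quaternion ℝ)
    (p : EuclideanSpace ℝ (Fin 4)) : Quaternion ℝ :=
  fderiv ℝ f p (EuclideanSpace.single 0 1)
    + iotaOf p * fderiv ℝ f p (toE4 (iotaOf p))

/-- The angular operator `∂/∂ι`, defined off the real axis through the
decomposition `D_l = ∂/∂t + ι ∂/∂r − (1/r) ∂/∂ι`. -/
noncomputable def angularOp (f : EuclideanSpace ℝ (Fin 4) → Quaternion ℝ)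
    (p : EuclideanSpace ℝ (Fin 4)) : Quaternion ℝ :=
  ‖(toQuat p).im‖ • (cullenOp f p - fueterL f p)

/-- The scalar Gauss property encoding that `frontier Kstar` is a smooth simple
closed hypersurface with outward unit normal `n` and surface measure `σ`. -/
def IsGaussRegion (Kstar V : Set (EuclideanSpace ℝ (Fin 4)))
    (n : EuclideanSpace ℝ (Fin 4) → EuclideanSpace ℝ (Fin 4))
    (σ : Measure (EuclideanSpace ℝ (Fin 4))) : Prop :=
  IsOpen Kstar ∧ Bornology.IsBounded Kstar ∧ IsOpen V ∧ closure Kstar ⊆ V ∧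
    (∀ p ∈ frontier Kstar, ‖n p‖ = 1) ∧
    ∀ g : EuclideanSpace ℝ (Fin 4) → ℝ, ContDiffOn ℝ 1 g V → ∀ i : Fin 4,
      ∫ p in frontier Kstar, g p * n p i ∂σ
        = ∫ p in Kstar, fderiv ℝ g p (EuclideanSpace.single i 1) ∂volume

/-! Off the real axis `D_l = (∂/∂t + ι ∂/∂r) − (1/r) ∂/∂ι`, so Cullen regularity turns the
volume integrand `−2v/r` into `D_l f`, and the claim becomes the quaternionic divergence
theorem `∫_{∂K*} n f dS = ∫_{K*} D_l f dV`. Writing `n f = Σᵢ eᵢ (nᵢ f)`, this follows from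
the scalar Gauss identity applied to each real component of `f` in each coordinate direction.
The Gauss identity also yields the integrability of the boundary integrands: a nonintegrable
`g nᵢ` would have integral `0`, which is excluded after perturbing `g` by the coordinate `xᵢ`. -/

lemma ContinuousLinearMap.fderiv_comp_apply {𝕜 X E F : Type*} [NontriviallyNormedField 𝕜]
    [NormedAddCommGroup X] [NormedSpace 𝕜 X] [NormedAddCommGroup E] [NormedSpace 𝕜 E]
    [NormedAddCommGroup F] [NormedSpace 𝕜 F] (L : E →L[𝕜] F) {f : X → E} {x : X}
    (hf : DifferentiableAt 𝕜 f x) (v : X) :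
    fderiv 𝕜 (fun y => L (f y)) x v = L (fderiv 𝕜 f x v) := by
  change fderiv 𝕜 (L ∘ f) x v = _
  rw [(L.hasFDerivAt.comp x hf.hasFDerivAt).fderiv]
  rfl

section FiniteDimensional

variable {E : Type*} [NormedAddCommGroup E] [NormedSpace ℝ E] [FiniteDimensional ℝ E]

noncomputable def finBasisCoord (j : Fin (Module.finrank ℝ E)) : E →L[ℝ] ℝ :=
  LinearMap.toContinuousLinearMap ((Module.finBasis ℝ E).coord j)

lemma smul_eq_sum_finBasisCoord (a : ℝ) (u : E) :
    a • u = ∑ j, (finBasisCoord j u * a) • Module.finBasis ℝ E j := by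
  conv_lhs => rw [← (Module.finBasis ℝ E).sum_repr u, Finset.smul_sum]
  simp only [finBasisCoord, LinearMap.coe_toContinuousLinearMap', Module.Basis.coord_apply,
    smul_smul, mul_comm]

end FiniteDimensional

namespace IsGaussRegion

variable {Kstar V : Set (EuclideanSpace ℝ (Fin 4))}
  {n : EuclideanSpace ℝ (Fin 4) → EuclideanSpace ℝ (Fin 4)}
  {σ : Measure (EuclideanSpace ℝ (Fin 4))}
  {E : Type*} [NormedAddCommGroup E] [NormedSpace ℝ E]

protected lemma isOpen (hK : IsGaussRegion Kstar V n σ) : IsOpen Kstar := hK.1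

lemma isBounded (hK : IsGaussRegion Kstar V n σ) : Bornology.IsBounded Kstar := hK.2.1

lemma isOpen_neighborhood (hK : IsGaussRegion Kstar V n σ) : IsOpen V := hK.2.2.1

lemma closure_subset (hK : IsGaussRegion Kstar V n σ) : closure Kstar ⊆ V := hK.2.2.2.1

lemma setIntegral_mul_normal (hK : IsGaussRegion Kstar V n σ)
    {g : EuclideanSpace ℝ (Fin 4) → ℝ} (hg : ContDiffOn ℝ 1 g V) (i : Fin 4) :
    ∫ p in frontier Kstar, g p * n p i ∂σ
      = ∫ p in Kstar, fderiv ℝ g p (EuclideanSpace.single i 1) :=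
  hK.2.2.2.2.2 g hg i

lemma subset (hK : IsGaussRegion Kstar V n σ) : Kstar ⊆ V :=
  subset_closure.trans hK.closure_subset

lemma differentiableAt (hK : IsGaussRegion Kstar V n σ) {F : EuclideanSpace ℝ (Fin 4) → E}
    (hF : ContDiffOn ℝ 1 F V) {p : EuclideanSpace ℝ (Fin 4)} (hp : p ∈ Kstar) :
    DifferentiableAt ℝ F p :=
  (hF.differentiableOn one_ne_zero p (hK.subset hp)).differentiableAt
    (hK.isOpen_neighborhood.mem_nhds (hK.subset hp))

lemma integrableOn_fderiv (hK : IsGaussRegion Kstar V n σ) {F : EuclideanSpace ℝ (Fin 4) → E}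
    (hF : ContDiffOn ℝ 1 F V) (v : EuclideanSpace ℝ (Fin 4)) :
    IntegrableOn (fun p => fderiv ℝ F p v) Kstar :=
  have hcont : ContinuousOn (fun p => fderiv ℝ F p v) V :=
    (hF.continuousOn_fderiv_of_isOpen hK.isOpen_neighborhood le_rfl).clm_apply continuousOn_const
  ((hcont.mono hK.closure_subset).integrableOn_compact
    hK.isBounded.isCompact_closure).mono_set subset_closure

lemma integrableOn_mul_normal_of_ne_zero (hK : IsGaussRegion Kstar V n σ)
    {g : EuclideanSpace ℝ (Fin 4) → ℝ} (hg : ContDiffOn ℝ 1 g V) {i : Fin 4}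
    (h : ∫ p in Kstar, fderiv ℝ g p (EuclideanSpace.single i 1) ≠ 0) :
    IntegrableOn (fun p => g p * n p i) (frontier Kstar) σ :=
  Integrable.of_integral_ne_zero (by rwa [hK.setIntegral_mul_normal hg i])

lemma integrableOn_mul_normal (hK : IsGaussRegion Kstar V n σ)
    {g : EuclideanSpace ℝ (Fin 4) → ℝ} (hg : ContDiffOn ℝ 1 g V) (i : Fin 4) :
    IntegrableOn (fun p => g p * n p i) (frontier Kstar) σ := by
  rcases Kstar.eq_empty_or_nonempty with rfl | hne
  · simp
  by_cases hg0 : ∫ p in Kstar, fderiv ℝ g p (EuclideanSpace.single i 1) = 0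
  swap
  · exact hK.integrableOn_mul_normal_of_ne_zero hg hg0
  -- Otherwise perturb `g` by the coordinate `xᵢ`, whose `∂ᵢ` integrates to `vol K* ≠ 0`.
  set x : EuclideanSpace ℝ (Fin 4) →L[ℝ] ℝ := EuclideanSpace.proj i
  have hvol : volume.real Kstar ≠ 0 :=
    ENNReal.toReal_ne_zero.2 ⟨(hK.isOpen.measure_pos volume hne).ne',
      hK.isBounded.measure_lt_top.ne⟩
  have hx : ∀ p, fderiv ℝ x p (EuclideanSpace.single i 1) = 1 := fun p => by
    rw [x.fderiv]
    simp [x]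
  have hgx : ∀ p ∈ Kstar, fderiv ℝ (fun q => g q + x q) p (EuclideanSpace.single i 1)
      = fderiv ℝ g p (EuclideanSpace.single i 1) + 1 := fun p hp => by
    rw [fderiv_fun_add (hK.differentiableAt hg hp) x.differentiableAt, add_apply, hx]
  have hxn : IntegrableOn (fun p => x p * n p i) (frontier Kstar) σ :=
    hK.integrableOn_mul_normal_of_ne_zero x.contDiff.contDiffOn (by simp_rw [hx]; simpa using hvol)
  have hgxn : IntegrableOn (fun p => (g p + x p) * n p i) (frontier Kstar) σ := by
    refine hK.integrableOn_mul_normal_of_ne_zero (hg.add x.contDiff.contDiffOn) ?_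
    rwa [setIntegral_congr_fun hK.isOpen.measurableSet hgx,
      integral_add (hK.integrableOn_fderiv hg _)
        (integrableOn_const hK.isBounded.measure_lt_top.ne),
      hg0, setIntegral_const, smul_eq_mul, mul_one, zero_add]
  refine (hgxn.sub hxn).congr_fun (fun p _ => ?_) measurableSet_frontier
  simp only [Pi.sub_apply]
  ring

section FiniteDimensional

variable [FiniteDimensional ℝ E]

lemma integrableOn_smul_normal (hK : IsGaussRegion Kstar V n σ)
    {F : EuclideanSpace ℝ (Fin 4) → E} (hF : ContDiffOn ℝ 1 F V) (i : Fin 4) :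
    IntegrableOn (fun p => n p i • F p) (frontier Kstar) σ := by
  simp_rw [smul_eq_sum_finBasisCoord (n _ i)]
  exact integrable_finsetSum _ fun j _ =>
    (hK.integrableOn_mul_normal ((finBasisCoord j).contDiff.comp_contDiffOn hF) i).smul_const _

lemma setIntegral_smul_normal (hK : IsGaussRegion Kstar V n σ)
    {F : EuclideanSpace ℝ (Fin 4) → E} (hF : ContDiffOn ℝ 1 F V) (i : Fin 4) :
    ∫ p in frontier Kstar, n p i • F p ∂σ
      = ∫ p in Kstar, fderiv ℝ F p (EuclideanSpace.single i 1) := by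
  have hcoord : ∀ j, ContDiffOn ℝ 1 (fun p => finBasisCoord j (F p)) V := fun j =>
    (finBasisCoord j).contDiff.comp_contDiffOn hF
  have hderiv : ∀ p ∈ Kstar, fderiv ℝ F p (EuclideanSpace.single i 1) = ∑ j,
      fderiv ℝ (fun q => finBasisCoord j (F q)) p (EuclideanSpace.single i 1)
        • Module.finBasis ℝ E j := fun p hp => by
    simp_rw [(finBasisCoord _).fderiv_comp_apply (hK.differentiableAt hF hp)]
    simpa using smul_eq_sum_finBasisCoord 1 (fderiv ℝ F p (EuclideanSpace.single i 1))
  simp_rw [smul_eq_sum_finBasisCoord (n _ i)]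
  rw [setIntegral_congr_fun hK.isOpen.measurableSet hderiv,
    integral_finsetSum _ fun j _ => (hK.integrableOn_mul_normal (hcoord j) i).smul_const _,
    integral_finsetSum _ fun j _ => (hK.integrableOn_fderiv (hcoord j) _).smul_const _]
  simp_rw [integral_smul_const, hK.setIntegral_mul_normal (hcoord _) i]

end FiniteDimensional

end IsGaussRegion

lemma toQuat_eq_sum_smul_quatUnit (x : EuclideanSpace ℝ (Fin 4)) :
    toQuat x = ∑ i, x i • quatUnit i := by
  ext <;> simp only [Fin.sum_univ_four, Quaternion.re_add, Quaternion.imI_add, Quaternion.imJ_add,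
    Quaternion.imK_add, Quaternion.re_smul, Quaternion.imI_smul, Quaternion.imJ_smul,
    Quaternion.imK_smul] <;> simp [toQuat, quatUnit, Quaternion.re_one, Quaternion.imI_one,
    Quaternion.imJ_one, Quaternion.imK_one]

lemma toQuat_mul_eq_sum (x : EuclideanSpace ℝ (Fin 4)) (q : Quaternion ℝ) :
    toQuat x * q = ∑ i, quatUnit i * (x i • q) := by
  simp only [toQuat_eq_sum_smul_quatUnit, Finset.sum_mul, smul_mul_assoc, mul_smul_comm]

theorem IsGaussRegion.setIntegral_toQuat_mul_eq_setIntegral_fueterL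
    {Kstar V : Set (EuclideanSpace ℝ (Fin 4))}
    {n : EuclideanSpace ℝ (Fin 4) → EuclideanSpace ℝ (Fin 4)}
    {σ : Measure (EuclideanSpace ℝ (Fin 4))} {F : EuclideanSpace ℝ (Fin 4) → Quaternion ℝ}
    (hK : IsGaussRegion Kstar V n σ) (hF : ContDiffOn ℝ 1 F V) :
    ∫ p in frontier Kstar, toQuat (n p) * F p ∂σ = ∫ p in Kstar, fueterL F p := by
  simp_rw [toQuat_mul_eq_sum, fueterL]
  rw [integral_finsetSum _ fun i _ => (hK.integrableOn_smul_normal hF i).const_mul _,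
    integral_finsetSum _ fun i _ => (hK.integrableOn_fderiv hF _).const_mul _]
  refine Finset.sum_congr rfl fun i _ => ?_
  rw [integral_const_mul_of_integrable (hK.integrableOn_smul_normal hF i),
    integral_const_mul_of_integrable (hK.integrableOn_fderiv hF _),
    hK.setIntegral_smul_normal hF i]

lemma fueterL_eq_of_cullenOp_eq_zero {f : EuclideanSpace ℝ (Fin 4) → Quaternion ℝ}
    {p : EuclideanSpace ℝ (Fin 4)} (hp : (toQuat p).im ≠ 0) (hf : cullenOp f p = 0) :
    fueterL f p = (-2 / ‖(toQuat p).im‖) • ((1 / 2 : ℝ) • angularOp f p) := by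
  have hr : ‖(toQuat p).im‖ ≠ 0 := norm_ne_zero_iff.2 hp
  rw [angularOp, hf, zero_sub, smul_smul, smul_smul,
    show -2 / ‖(toQuat p).im‖ * (1 / 2) * ‖(toQuat p).im‖ = -1 by field_simp, neg_one_smul,
    neg_neg]

/-- Integral theorem for Cullen-regular functions: if `f` is `C¹` and
left-Cullen-regular on a neighborhood of the closure of a smooth bounded region
`K*` disjoint from the real axis, and `v := (1/2)(∂/∂ι) f`, then
`∫_K n(p) f(p) dS = ∫_{K*} (−2v/r) dV`. -/
theorem integral_theorem_cullen_regular
    (Kstar V : Set (EuclideanSpace ℝ (Fin 4)))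
    (n : EuclideanSpace ℝ (Fin 4) → EuclideanSpace ℝ (Fin 4))
    (σ : Measure (EuclideanSpace ℝ (Fin 4)))
    (hK : IsGaussRegion Kstar V n σ)
    (hax : ∀ p ∈ V, (toQuat p).im ≠ 0)
    (f : EuclideanSpace ℝ (Fin 4) → Quaternion ℝ)
    (hf : ContDiffOn ℝ 1 f V)
    (hreg : ∀ p ∈ V, cullenOp f p = 0) :
    ∫ p in frontier Kstar, toQuat (n p) * f p ∂σ
      = ∫ p in Kstar,
          (-2 / ‖(toQuat p).im‖) • ((1 / 2 : ℝ) • angularOp f p) ∂volume := by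
  rw [hK.setIntegral_toQuat_mul_eq_setIntegral_fueterL hf]
  exact setIntegral_congr_fun hK.1.measurableSet fun p hp =>
    fueterL_eq_of_cullenOp_eq_zero (hax p (hK.subset hp)) (hreg p (hK.subset hp))
end
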